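/- Improved lower bound on the sum of AdaBB stepsizes: with the initial ratio θ_0 chosen adaptively, the stepsizes generated by the general AdaBB iteration satisfy Σ_{i=1}^k α_i ≥ (k − 2 + √2)/L for every k ≥ 1. -/

import Mathlib

open scoped RealInnerProductSpace
open Finset Filter

noncomputable section

/-- The general AdaBB iteration (Algorithm 2 of the paper) for a convex differentiable
function `f : ℝⁿ → ℝ` that attains its minimum.  `f'` is the gradient of `f`,
`x` the iterates, `α` the stepsizes, `θ` the stepsize ratios and `lam` the short BB stepsizes. -/
structure AdaBB (n : ℕ) where
  f : EuclideanSpace ℝ (Fin n) → ℝ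
  f' : EuclideanSpace ℝ (Fin n) → EuclideanSpace ℝ (Fin n)
  x : ℕ → EuclideanSpace ℝ (Fin n)
  α : ℕ → ℝ
  θ : ℕ → ℝ
  lam : ℕ → ℝ
  hconv : ConvexOn ℝ Set.univ f
  hgrad : ∀ y, HasGradientAt f (f' y) y
  hmin : ∃ z, ∀ y, f z ≤ f y
  hα0 : 0 < α 0
  hθ0 : 0 ≤ θ 0
  hx1 : x 1 = x 0 - α 0 • f' (x 0)
  hne : ∀ k, f' (x (k + 1)) ≠ f' (x k)
  hlam : ∀ k, lam (k + 1) =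
    ⟪f' (x (k + 1)) - f' (x k), x (k + 1) - x k⟫ / ‖f' (x (k + 1)) - f' (x k)‖ ^ 2
  hlampos : ∀ k, 0 < lam (k + 1)
  hcase1 : ∀ k, α k ≤ lam (k + 1) →
    α (k + 1) = Real.sqrt (1 + θ k) * α k ∧ θ (k + 1) = α (k + 1) / α k
  hcase2 : ∀ k, α k / 2 < lam (k + 1) → lam (k + 1) < α k →
    (α (k + 1) = min (Real.sqrt (lam (k + 1) / (2 * (α k - lam (k + 1)))))
        (Real.sqrt ((1 + θ k) * lam (k + 1) / (2 * lam (k + 1) - α k))) * α k ∨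
      α (k + 1) = lam (k + 1)) ∧
    θ (k + 1) = 2 * α (k + 1) / α k - α (k + 1) / lam (k + 1)
  hcase3 : ∀ k, lam (k + 1) ≤ α k / 2 →
    (α (k + 1) = Real.sqrt (α k / (2 * (α k - lam (k + 1)))) * lam (k + 1) ∨
      α (k + 1) = lam (k + 1) / Real.sqrt 2) ∧
    θ (k + 1) = α (k + 1) / α k
  hstep : ∀ k, x (k + 2) = x (k + 1) - α (k + 1) • f' (x (k + 1))

namespace AdaBB

variable {n : ℕ}

/-- `M_k` (for `k ≥ 1`). -/
def M (S : AdaBB n) (k : ℕ) : ℝ :=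
  if S.α (k - 1) ≤ S.lam k then 0
  else if S.α (k - 1) / 2 < S.lam k then
    S.α k ^ 2 / (S.lam k * S.α (k - 1)) - S.α k ^ 2 / S.α (k - 1) ^ 2
  else S.α k ^ 2 / S.lam k ^ 2 - S.α k ^ 2 / (S.α (k - 1) * S.lam k)

/-- `P_k` for `k ≥ 1`. -/
def Paux (S : AdaBB n) (k : ℕ) : ℝ :=
  if S.α (k - 1) ≤ S.lam k then S.α k ^ 2 / S.α (k - 1)
  else if S.α (k - 1) / 2 < S.lam k then
    2 * S.α k ^ 2 / S.α (k - 1) - S.α k ^ 2 / S.lam k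
  else S.α k ^ 2 / S.α (k - 1)

/-- `P_k`, with the convention `P_0 = P_1 - α_0`. -/
def P (S : AdaBB n) (k : ℕ) : ℝ :=
  if k = 0 then S.Paux 1 - S.α 0 else S.Paux k

/-- `w_k = α_k + P_k - P_{k+1}`. -/
def w (S : AdaBB n) (k : ℕ) : ℝ := S.α k + S.P k - S.P (k + 1)

/-- The Lyapunov function `Υ_k` (for `k ≥ 1`), relative to a minimizer `xs` of `f`. -/
def Upsilon (S : AdaBB n) (xs : EuclideanSpace ℝ (Fin n)) (k : ℕ) : ℝ :=
  ‖S.x k - xs‖ ^ 2 + 2 * S.M k * ‖S.x k - S.x (k - 1)‖ ^ 2 +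
    (2 * S.α (k - 1) + 2 * S.P (k - 1)) * (S.f (S.x (k - 1)) - S.f xs)

end AdaBB

end

/-!
The Lyapunov function `Υ_k` of the paper does not increase along the iteration and dominates
`‖x^k - x*‖²`, while `Υ_1 ≤ R²`; hence all iterates lie in `B(x*, R)`, where cocoercivity turns
the definition of `λ_k` into `λ_k ≥ 1/L`. The decrease `Υ_{k+1} ≤ Υ_k` follows from the two
first-order convexity inequalities and a quadratic inequality in `∇f(x^{k-1})` and
`∇f(x^k) - ∇f(x^{k-1})`, which only has to be checked on the two edges of the cone cut out by
Cauchy–Schwarz.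

With `u = 1/L ≤ λ_k`, a step of case (ii) has `α_k ≥ λ_k ≥ u`; a step of case (iii) has
`α_k ≥ λ_k/√2`, but then `α_{k-1} ≥ 2λ_k ≥ 2u`; a step of case (i) does not shrink the stepsize and
makes the next growth factor `√(1 + θ_k) ≥ √2`. Keeping track of the surplus `α_k - u` and of the
deficit of a potential next case-(i) step shows that the total deficit never exceeds `(2 - √2)u`;
the choice of `θ_0` gives `λ_1 ≤ √2 α_1`, which starts the induction.
-/

theorem ConvexOn.sub_le_inner_of_hasGradientAt {F : Type*} [NormedAddCommGroup F]
    [InnerProductSpace ℝ F] [CompleteSpace F] {f : F → ℝ} {g x : F} (hf : ConvexOn ℝ Set.univ f)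
    (hg : HasGradientAt f g x) (y : F) : f x - f y ≤ ⟪g, x - y⟫ := by
  have hφ : ConvexOn ℝ Set.univ (f ∘ AffineMap.lineMap (k := ℝ) x y) := by
    simpa using hf.comp_affineMap (AffineMap.lineMap (k := ℝ) x y)
  have hφ' : HasDerivAt (f ∘ AffineMap.lineMap (k := ℝ) x y) ⟪g, y - x⟫ 0 := by
    have hfx : HasFDerivAt f (InnerProductSpace.toDual ℝ F g) (AffineMap.lineMap x y (0 : ℝ)) := by
      simpa using hg.hasFDerivAt
    simpa using hfx.comp_hasDerivAt (0 : ℝ) AffineMap.hasDerivAt_lineMap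
  have := hφ.le_slope_of_hasDerivAt trivial trivial one_pos hφ'
  rw [← neg_sub y x, inner_neg_right]
  simp only [slope, Function.comp_apply, AffineMap.lineMap_apply_one,
    AffineMap.lineMap_apply_zero, vsub_eq_sub, sub_zero, inv_one, one_smul] at this
  linarith

section RealLemmas

variable {a c x A θ : ℝ}

lemma sq_le_of_le_sqrt_mul (hA : 0 ≤ A) (hx : 0 ≤ x) (h : x ≤ √A * c) : x ^ 2 ≤ A * c ^ 2 := by
  simpa [mul_pow, Real.sq_sqrt hA] using pow_le_pow_left₀ hx h 2

lemma le_sqrt_mul_of_sq_le (hc : 0 ≤ c) (h : x ^ 2 ≤ A * c ^ 2) : x ≤ √A * c := by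
  rw [← Real.sqrt_sq hc, ← Real.sqrt_mul' _ (sq_nonneg c)]
  exact Real.le_sqrt_of_sq_le h

lemma le_sqrt_one_add_mul (ha : 0 ≤ a) (hθ : 0 ≤ θ) : a ≤ √(1 + θ) * a :=
  le_mul_of_one_le_left ha (Real.one_le_sqrt.2 (by linarith))

-- A linear form that is nonpositive at `(H, E) = (1, 0)` and at `(t, s)` is nonpositive on the
-- cone `0 ≤ t E ≤ s H` spanned by these two points.
lemma add_mul_nonpos_of_le_mul {p q s t H E : ℝ} (ht : 0 < t) (hH : 0 ≤ H) (hE : 0 ≤ E)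
    (hEH : t * E ≤ s * H) (hp : p ≤ 0) (hpq : p * t + q * s ≤ 0) : p * H + q * E ≤ 0 := by
  rcases le_total q 0 with hq | hq
  · nlinarith
  · have : t * (p * H + q * E) ≤ 0 := by nlinarith [mul_le_mul_of_nonneg_left hEH hq]
    exact nonpos_of_mul_nonpos_right this ht

end RealLemmas

namespace AdaBB

-- `StepRule a θ l b θ'`: the pair `(α_k, θ_k) = (b, θ')` is produced from
-- `(α_{k-1}, θ_{k-1}) = (a, θ)` and `λ_k = l` by one of the options of case (i), (ii) or (iii).
def StepRule (a θ l b θ' : ℝ) : Prop :=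
  (a ≤ l → b = √(1 + θ) * a ∧ θ' = b / a) ∧
  (a / 2 < l → l < a →
    (b = min (√(l / (2 * (a - l)))) (√((1 + θ) * l / (2 * l - a))) * a ∨ b = l) ∧
    θ' = 2 * b / a - b / l) ∧
  (l ≤ a / 2 → (b = √(a / (2 * (a - l))) * l ∨ b = l / √2) ∧ θ' = b / a)

noncomputable def coeffM (a l b : ℝ) : ℝ :=
  if a ≤ l then 0
  else if a / 2 < l then b ^ 2 / (l * a) - b ^ 2 / a ^ 2
  else b ^ 2 / l ^ 2 - b ^ 2 / (a * l)

noncomputable def coeffP (a l b : ℝ) : ℝ :=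
  if a ≤ l then b ^ 2 / a
  else if a / 2 < l then 2 * b ^ 2 / a - b ^ 2 / l
  else b ^ 2 / a

-- The surplus of the stepsize `a` over `u`, plus the deficit `u - √(1 + θ) a` that a following
-- step of case (i) would still leave.
noncomputable def credit (u a θ : ℝ) : ℝ := max (a - u) 0 + max (u - √(1 + θ) * a) 0

section Coefficients

variable {a l b : ℝ}

lemma coeffM_nonneg (ha : 0 < a) (hl : 0 < l) : 0 ≤ coeffM a l b := by
  unfold coeffM
  split_ifs with h₁ h₂
  · rfl
  · rw [div_sub_div _ _ (by positivity) (by positivity)]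
    have := mul_nonneg (mul_nonneg (sq_nonneg b) ha.le) (sub_nonneg.2 (not_le.1 h₁).le)
    exact div_nonneg (by linarith) (by positivity)
  · rw [div_sub_div _ _ (by positivity) (by positivity)]
    have := mul_nonneg (mul_nonneg (sq_nonneg b) hl.le) (sub_nonneg.2 (not_le.1 h₁).le)
    exact div_nonneg (by linarith) (by positivity)

lemma coeffP_nonneg (ha : 0 < a) (hl : 0 < l) : 0 ≤ coeffP a l b := by
  unfold coeffP
  split_ifs with h₁ h₂
  · positivity
  · rw [div_sub_div _ _ (by positivity) (by positivity)]
    exact div_nonneg (by nlinarith [sq_nonneg b]) (by positivity)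
  · positivity

lemma sq_le_coeffM_add_coeffP (ha : 0 < a) (hl : 0 < l) :
    b ^ 2 ≤ coeffM a l b * a ^ 2 + a * coeffP a l b := by
  unfold coeffM coeffP
  split_ifs with h₁ h₂
  · field_simp; linarith
  · field_simp; exact le_of_eq (by ring)
  · field_simp
    nlinarith [mul_nonneg (sq_nonneg b) (mul_nonneg ha.le (sub_nonneg.2 (not_le.1 h₁).le))]

lemma sq_mul_sub_sq_le_coeffM_add_coeffP (ha : 0 < a) (hl : 0 < l) :
    b ^ 2 * (a - l) ^ 2 ≤ coeffM a l b * a ^ 2 * l ^ 2 + a * coeffP a l b * l * (l - a) := by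
  unfold coeffM coeffP
  split_ifs with h₁ h₂
  · field_simp
    nlinarith [mul_nonneg (sq_nonneg b) (mul_nonneg ha.le (sub_nonneg.2 h₁))]
  · field_simp; exact le_of_eq (by ring)
  · field_simp; exact le_of_eq (by ring)

-- With `g = ∇f(x^{k-1})`, `d = ∇f(x^k) - ∇f(x^{k-1})` and `c = 1 + 2 M_{k+1}`, this is the
-- inequality that remains of `Υ_{k+1} ≤ Υ_k` after the two convexity inequalities.
lemma mul_norm_add_sq_le_coeff {F : Type*} [NormedAddCommGroup F] [InnerProductSpace ℝ F]
    {g d : F} {c : ℝ} (ha : 0 < a) (hl : 0 < l) (hgd : a * ⟪d, g⟫ = -(l * ‖d‖ ^ 2)) (hc : c ≤ 2) :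
    c * b ^ 2 * ‖g + d‖ ^ 2 + 2 * l * coeffP a l b * ‖d‖ ^ 2 ≤
      2 * (coeffM a l b * a ^ 2 + a * coeffP a l b) * ‖g‖ ^ 2 := by
  set M := coeffM a l b
  set P := coeffP a l b
  have hnorm : a * ‖g + d‖ ^ 2 = a * ‖g‖ ^ 2 + a * ‖d‖ ^ 2 - 2 * l * ‖d‖ ^ 2 := by
    rw [norm_add_sq_real, real_inner_comm]; linear_combination 2 * hgd
  have hcs : (l * ‖d‖) ^ 2 ≤ (a * ‖g‖) ^ 2 := by
    refine pow_le_pow_left₀ (by positivity) ?_ 2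
    rcases (norm_nonneg d).eq_or_lt with hd | hd
    · rw [← hd, mul_zero]; positivity
    refine le_of_mul_le_mul_left ?_ hd
    nlinarith [neg_le_of_abs_le (abs_real_inner_le_norm d g)]
  have hA : b ^ 2 ≤ M * a ^ 2 + a * P := sq_le_coeffM_add_coeffP ha hl
  have hB : b ^ 2 * (a - l) ^ 2 ≤ M * a ^ 2 * l ^ 2 + a * P * l * (l - a) :=
    sq_mul_sub_sq_le_coeffM_add_coeffP ha hl
  have hcb : c * b ^ 2 ≤ 2 * b ^ 2 := mul_le_mul_of_nonneg_right hc (sq_nonneg b)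
  have hcb' : c * b ^ 2 * (a - l) ^ 2 ≤ 2 * b ^ 2 * (a - l) ^ 2 :=
    mul_le_mul_of_nonneg_right hcb (sq_nonneg _)
  have hedge : a * (c * b ^ 2 - 2 * (M * a ^ 2 + a * P)) * l ^ 2 +
      (c * b ^ 2 * (a - 2 * l) + 2 * a * l * P) * a ^ 2 ≤ 0 := by
    have : c * b ^ 2 * (a - l) ^ 2 - 2 * (M * a ^ 2 * l ^ 2 + a * P * l * (l - a)) ≤ 0 := by
      linarith
    linear_combination a * this
  have key := add_mul_nonpos_of_le_mul (by positivity : 0 < l ^ 2) (sq_nonneg ‖g‖)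
    (sq_nonneg ‖d‖) (by linarith [hcs]) (mul_nonpos_of_nonneg_of_nonpos ha.le (by linarith)) hedge
  rw [← sub_nonpos]
  refine nonpos_of_mul_nonpos_right ?_ ha
  linear_combination key + c * b ^ 2 * hnorm

end Coefficients

namespace StepRule

variable {a θ l b θ' u : ℝ}

lemma case_i (h : StepRule a θ l b θ') (ha : 0 < a) (hal : a ≤ l) :
    b = √(1 + θ) * a ∧ θ' = √(1 + θ) := by
  obtain ⟨rfl, rfl⟩ := h.1 hal
  exact ⟨rfl, by field_simp⟩

lemma case_ii (h : StepRule a θ l b θ') (ha : 0 < a) (hl : 0 < l) (hθ : 0 ≤ θ)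
    (h₁ : a / 2 < l) (h₂ : l < a) :
    l ≤ b ∧ 2 * b ^ 2 * (a - l) ≤ l * a ^ 2 ∧ b ^ 2 * (2 * l - a) ≤ (1 + θ) * l * a ^ 2 := by
  have hA : 0 < 2 * (a - l) := by linarith
  have hB : 0 < 2 * l - a := by linarith
  have hlA : l ≤ √(l / (2 * (a - l))) * a := by
    refine le_sqrt_mul_of_sq_le ha.le ?_
    rw [div_mul_eq_mul_div, le_div_iff₀ hA]
    nlinarith [sq_nonneg (a - 2 * l)]
  have hlB : l ≤ √((1 + θ) * l / (2 * l - a)) * a := by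
    refine le_sqrt_mul_of_sq_le ha.le ?_
    rw [div_mul_eq_mul_div, le_div_iff₀ hB]
    nlinarith [mul_nonneg hθ (mul_nonneg hl.le (sq_nonneg a)),
      mul_pos hl (mul_pos (sub_pos.2 h₂) (by linarith : 0 < a + 2 * l))]
  obtain ⟨hlb, hbA, hbB⟩ :
      l ≤ b ∧ b ≤ √(l / (2 * (a - l))) * a ∧ b ≤ √((1 + θ) * l / (2 * l - a)) * a := by
    rcases (h.2.1 h₁ h₂).1 with rfl | rfl
    · rw [min_mul_of_nonneg _ _ ha.le]
      exact ⟨le_min hlA hlB, min_le_left _ _, min_le_right _ _⟩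
    · exact ⟨le_rfl, hlA, hlB⟩
  have hb : 0 ≤ b := hl.le.trans hlb
  have hbA' := sq_le_of_le_sqrt_mul (by positivity) hb hbA
  have hbB' := sq_le_of_le_sqrt_mul (by positivity) hb hbB
  rw [div_mul_eq_mul_div, le_div_iff₀ hA] at hbA'
  rw [div_mul_eq_mul_div, le_div_iff₀ hB] at hbB'
  exact ⟨hlb, by linarith, by linarith⟩

lemma case_iii (h : StepRule a θ l b θ') (hl : 0 < l) (h₁ : l ≤ a / 2) :
    0 < b ∧ b ^ 2 ≤ l ^ 2 ∧ l ≤ √2 * b ∧ 2 * b ^ 2 * (a - l) ≤ a * l ^ 2 := by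
  have ha : 0 < a := by linarith
  have hal : a - l ≠ 0 := by linarith
  have hA : 0 < 2 * (a - l) := by linarith
  obtain ⟨hb, hsq, hsq', hbA⟩ : 0 < b ∧ b ^ 2 ≤ l ^ 2 ∧ l ^ 2 ≤ 2 * b ^ 2 ∧
      2 * b ^ 2 * (a - l) ≤ a * l ^ 2 := by
    rcases (h.2.2 h₁).1 with rfl | rfl
    · have hC : (√(a / (2 * (a - l))) * l) ^ 2 * (2 * (a - l)) = a * l ^ 2 := by
        rw [mul_pow, Real.sq_sqrt (by positivity)]
        field_simp
      exact ⟨mul_pos (Real.sqrt_pos.2 (div_pos ha hA)) hl, by nlinarith, by nlinarith,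
        by linarith⟩
    · have h2 : √2 ^ 2 = 2 := Real.sq_sqrt zero_le_two
      refine ⟨by positivity, ?_, ?_, ?_⟩ <;> rw [div_pow, h2] <;> nlinarith
  exact ⟨hb, hsq, le_sqrt_mul_of_sq_le hb.le (by linarith), hbA⟩

lemma pos (h : StepRule a θ l b θ') (ha : 0 < a) (hl : 0 < l) (hθ : 0 ≤ θ) :
    0 < b ∧ 0 ≤ θ' := by
  rcases le_or_gt a l with h₁ | h₁
  · obtain ⟨rfl, rfl⟩ := h.case_i ha h₁
    exact ⟨mul_pos (Real.sqrt_pos.2 (by linarith)) ha, Real.sqrt_nonneg _⟩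
  rcases le_or_gt l (a / 2) with h₂ | h₂
  · rw [(h.2.2 h₂).2]
    have hb := (h.case_iii hl h₂).1
    exact ⟨hb, by positivity⟩
  · rw [(h.2.1 h₂ h₁).2, div_sub_div _ _ ha.ne' hl.ne']
    have hb := hl.trans_le (h.case_ii ha hl hθ h₂ h₁).1
    exact ⟨hb, div_nonneg (by nlinarith) (by positivity)⟩

lemma coeffM_le_half (h : StepRule a θ l b θ') (ha : 0 < a) (hl : 0 < l) (hθ : 0 ≤ θ) :
    coeffM a l b ≤ 1 / 2 := by
  unfold coeffM
  split_ifs with h₁ h₂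
  · norm_num
  · have := (h.case_ii ha hl hθ h₂ (not_le.1 h₁)).2.1
    rw [div_sub_div _ _ (by positivity) (by positivity), div_le_iff₀ (by positivity)]
    nlinarith
  · have := (h.case_iii hl (not_lt.1 h₂)).2.2.2
    rw [div_sub_div _ _ (by positivity) (by positivity), div_le_iff₀ (by positivity)]
    nlinarith

lemma coeffP_eq (h : StepRule a θ l b θ') (ha : 0 < a) (hl : 0 < l) :
    coeffP a l b = b * θ' := by
  unfold coeffP
  split_ifs with h₁ h₂
  · rw [(h.1 h₁).2]; field_simp
  · rw [(h.2.1 h₂ (not_le.1 h₁)).2]; field_simp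
  · rw [(h.2.2 (not_lt.1 h₂)).2]; field_simp

lemma coeffP_le (h : StepRule a θ l b θ') (ha : 0 < a) (hl : 0 < l) (hθ : 0 ≤ θ) :
    coeffP a l b ≤ a * (1 + θ) := by
  unfold coeffP
  split_ifs with h₁ h₂
  · rw [(h.case_i ha h₁).1, div_le_iff₀ ha, mul_pow, Real.sq_sqrt (by linarith)]
    nlinarith
  · have := (h.case_ii ha hl hθ h₂ (not_le.1 h₁)).2.2
    rw [div_sub_div _ _ ha.ne' hl.ne', div_le_iff₀ (by positivity)]
    nlinarith
  · have := (h.case_iii hl (not_lt.1 h₂)).2.1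
    rw [div_le_iff₀ ha]
    nlinarith [mul_nonneg hθ (sq_nonneg a), not_lt.1 h₂]

lemma le_sqrt_two_mul (h : StepRule a θ l b θ') (ha : 0 < a) (hl : 0 < l) (hθ : 0 ≤ θ)
    (hul : u ≤ l) (hua : u ≤ √2 * a) : u ≤ √2 * b := by
  rcases le_or_gt a l with h₁ | h₁
  · have hab : a ≤ b := (h.case_i ha h₁).1 ▸ le_sqrt_one_add_mul ha.le hθ
    nlinarith [Real.sqrt_nonneg 2]
  rcases le_or_gt l (a / 2) with h₂ | h₂
  · exact hul.trans (h.case_iii hl h₂).2.2.1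
  · have hlb := (h.case_ii ha hl hθ h₂ h₁).1
    nlinarith [Real.one_lt_sqrt_two]

lemma lam_le_sqrt_two_mul_of_initial (h : StepRule a θ l b θ') (ha : 0 < a) (hl : 0 < l)
    (hθ : θ = if √2 * a ≤ l then l ^ 2 / (2 * a ^ 2) - 1 else 0) : l ≤ √2 * b := by
  split_ifs at hθ with h₀
  · have hal : a ≤ l := by nlinarith [Real.one_lt_sqrt_two]
    rw [(h.case_i ha hal).1, hθ, ← mul_assoc, ← Real.sqrt_mul zero_le_two]
    refine le_sqrt_mul_of_sq_le ha.le (le_of_eq ?_)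
    field_simp
    ring
  subst hθ
  rcases le_or_gt a l with h₁ | h₁
  · rw [(h.case_i ha h₁).1, add_zero, Real.sqrt_one, one_mul]
    exact (not_le.1 h₀).le
  rcases le_or_gt l (a / 2) with h₂ | h₂
  · exact (h.case_iii hl h₂).2.2.1
  · have hlb := (h.case_ii ha hl le_rfl h₂ h₁).1
    nlinarith [Real.one_lt_sqrt_two]

lemma credit_le (h : StepRule a θ l b θ') (ha : 0 < a) (hl : 0 < l) (hθ : 0 ≤ θ)
    (hul : u ≤ l) (hua : u ≤ √2 * a) : credit u b θ' ≤ credit u a θ + b - u := by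
  obtain ⟨hb, hθ'⟩ := h.pos ha hl hθ
  have hX : a - u ≤ max (a - u) 0 := le_max_left _ _
  have hX₀ : 0 ≤ max (a - u) 0 := le_max_right _ _
  have hY₀ : 0 ≤ max (u - √(1 + θ) * a) 0 := le_max_right _ _
  have hb' : b ≤ √(1 + θ') * b := le_sqrt_one_add_mul hb.le hθ'
  unfold credit
  rcases le_or_gt a l with h₁ | h₁
  · obtain ⟨hba, rfl⟩ := h.case_i ha h₁
    have hsq : √2 ≤ √(1 + √(1 + θ)) :=
      Real.sqrt_le_sqrt (by linarith [Real.one_le_sqrt.2 (by linarith : 1 ≤ 1 + θ)])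
    have hab : a ≤ b := hba ▸ le_sqrt_one_add_mul ha.le hθ
    have hZ : max (u - √(1 + √(1 + θ)) * b) 0 = 0 :=
      max_eq_right (by nlinarith [mul_le_mul_of_nonneg_left hab (Real.sqrt_nonneg 2),
        mul_le_mul_of_nonneg_right hsq hb.le])
    have hY : u - b ≤ max (u - √(1 + θ) * a) 0 := hba ▸ le_max_left _ _
    rw [hZ, add_zero]
    exact max_le (by linarith) (by linarith)
  rcases le_or_gt l (a / 2) with h₂ | h₂
  · obtain ⟨-, -, hlb, -⟩ := h.case_iii hl h₂
    have hub : u ≤ 2 * b := by nlinarith [Real.sqrt_two_lt_three_halves]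
    have hZ : max (u - √(1 + θ') * b) 0 ≤ max (u - b) 0 := max_le_max_right 0 (by linarith)
    have habs : max (b - u) 0 + max (u - b) 0 ≤ a + b - 2 * u := by
      rcases le_total u b with hc | hc
      · rw [max_eq_left (by linarith), max_eq_right (by linarith)]; linarith
      · rw [max_eq_right (by linarith), max_eq_left (by linarith)]; linarith
    linarith
  · have hlb := (h.case_ii ha hl hθ h₂ h₁).1
    have hZ : max (u - √(1 + θ') * b) 0 = 0 := max_eq_right (by linarith)
    rw [hZ, add_zero, max_eq_left (by linarith)]
    linarith

end StepRule

lemma credit_nonneg {u a θ : ℝ} : 0 ≤ credit u a θ :=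
  add_nonneg (le_max_right _ _) (le_max_right _ _)

lemma credit_le_of_le_sqrt_two_mul {u a θ : ℝ} (ha : 0 ≤ a) (hu : 0 ≤ u) (hθ : 0 ≤ θ)
    (hua : u ≤ √2 * a) : credit u a θ ≤ a - (√2 - 1) * u := by
  have h2 : √2 * √2 = 2 := Real.mul_self_sqrt zero_le_two
  have hs := le_sqrt_one_add_mul ha hθ
  unfold credit
  rcases le_total u a with hc | hc
  · rw [max_eq_left (by linarith), max_eq_right (by linarith)]
    nlinarith [Real.sqrt_two_lt_three_halves]
  · rw [max_eq_right (by linarith)]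
    refine (add_le_add_right (max_le_max_right 0 (sub_le_sub_left hs u)) 0).trans ?_
    rw [max_eq_left (by linarith)]
    nlinarith [mul_le_mul_of_nonneg_left hua (Real.sqrt_nonneg 2)]

variable {n : ℕ} (S : AdaBB n)

lemma stepRule (k : ℕ) :
    StepRule (S.α k) (S.θ k) (S.lam (k + 1)) (S.α (k + 1)) (S.θ (k + 1)) :=
  ⟨S.hcase1 k, S.hcase2 k, S.hcase3 k⟩

lemma alpha_pos_and_theta_nonneg (k : ℕ) : 0 < S.α k ∧ 0 ≤ S.θ k := by
  induction k with
  | zero => exact ⟨S.hα0, S.hθ0⟩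
  | succ k ih => exact (S.stepRule k).pos ih.1 (S.hlampos k) ih.2

lemma alpha_pos (k : ℕ) : 0 < S.α k := (S.alpha_pos_and_theta_nonneg k).1

lemma theta_nonneg (k : ℕ) : 0 ≤ S.θ k := (S.alpha_pos_and_theta_nonneg k).2

lemma M_succ (k : ℕ) : S.M (k + 1) = coeffM (S.α k) (S.lam (k + 1)) (S.α (k + 1)) := rfl

lemma P_succ (k : ℕ) : S.P (k + 1) = coeffP (S.α k) (S.lam (k + 1)) (S.α (k + 1)) := rfl

lemma P_zero : S.P 0 = S.P 1 - S.α 0 := rfl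

lemma M_succ_nonneg (k : ℕ) : 0 ≤ S.M (k + 1) := coeffM_nonneg (S.alpha_pos k) (S.hlampos k)

lemma M_succ_le_half (k : ℕ) : S.M (k + 1) ≤ 1 / 2 :=
  (S.stepRule k).coeffM_le_half (S.alpha_pos k) (S.hlampos k) (S.theta_nonneg k)

lemma P_succ_nonneg (k : ℕ) : 0 ≤ S.P (k + 1) := coeffP_nonneg (S.alpha_pos k) (S.hlampos k)

lemma P_succ_le (k : ℕ) : S.P (k + 1) ≤ S.α k + S.P k := by
  cases k with
  | zero => rw [S.P_zero]; linarith
  | succ k =>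
    rw [S.P_succ (k + 1), S.P_succ k, (S.stepRule k).coeffP_eq (S.alpha_pos k) (S.hlampos k)]
    linarith [(S.stepRule (k + 1)).coeffP_le (S.alpha_pos _) (S.hlampos _) (S.theta_nonneg _)]

lemma alpha_add_P_nonneg (k : ℕ) : 0 ≤ S.α k + S.P k := (S.P_succ_nonneg k).trans (S.P_succ_le k)

lemma x_succ : ∀ k, S.x (k + 1) = S.x k - S.α k • S.f' (S.x k)
  | 0 => S.hx1
  | k + 1 => S.hstep k

lemma norm_x_succ_sub_sq (k : ℕ) (z : EuclideanSpace ℝ (Fin n)) :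
    ‖S.x (k + 1) - z‖ ^ 2 =
      ‖S.x k - z‖ ^ 2 - 2 * S.α k * ⟪S.f' (S.x k), S.x k - z⟫ + S.α k ^ 2 * ‖S.f' (S.x k)‖ ^ 2 := by
  rw [S.x_succ, sub_right_comm, norm_sub_sq_real, real_inner_smul_right, norm_smul,
    Real.norm_eq_abs, mul_pow, sq_abs, real_inner_comm]
  ring

lemma norm_x_succ_sub_x_sq (k : ℕ) :
    ‖S.x (k + 1) - S.x k‖ ^ 2 = S.α k ^ 2 * ‖S.f' (S.x k)‖ ^ 2 := by
  simpa using S.norm_x_succ_sub_sq k (S.x k)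

lemma inner_grad_sub_x_sub (k : ℕ) :
    ⟪S.f' (S.x (k + 1)) - S.f' (S.x k), S.x (k + 1) - S.x k⟫ =
      S.lam (k + 1) * ‖S.f' (S.x (k + 1)) - S.f' (S.x k)‖ ^ 2 := by
  have : ‖S.f' (S.x (k + 1)) - S.f' (S.x k)‖ ^ 2 ≠ 0 := by simpa [sub_eq_zero] using S.hne k
  rw [S.hlam k, div_mul_cancel₀ _ this]

lemma sub_le_inner_grad (x y : EuclideanSpace ℝ (Fin n)) : S.f x - S.f y ≤ ⟪S.f' x, x - y⟫ :=
  S.hconv.sub_le_inner_of_hasGradientAt (S.hgrad x) y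

lemma Upsilon_succ (xs : EuclideanSpace ℝ (Fin n)) (k : ℕ) :
    S.Upsilon xs (k + 1) = ‖S.x (k + 1) - xs‖ ^ 2 + 2 * S.M (k + 1) * ‖S.x (k + 1) - S.x k‖ ^ 2 +
      (2 * S.α k + 2 * S.P k) * (S.f (S.x k) - S.f xs) := rfl

lemma one_div_le_lam {L : ℝ} (k : ℕ)
    (hcoco : 1 / L * ‖S.f' (S.x (k + 1)) - S.f' (S.x k)‖ ^ 2 ≤
      ⟪S.f' (S.x (k + 1)) - S.f' (S.x k), S.x (k + 1) - S.x k⟫) :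
    1 / L ≤ S.lam (k + 1) := by
  rw [S.inner_grad_sub_x_sub k] at hcoco
  exact le_of_mul_le_mul_right hcoco (pow_pos (norm_pos_iff.2 (sub_ne_zero.2 (S.hne k))) 2)

section Lyapunov

variable {S} {xs : EuclideanSpace ℝ (Fin n)}

lemma Upsilon_succ_succ_le (hxs : ∀ y, S.f xs ≤ S.f y) (k : ℕ) :
    S.Upsilon xs (k + 2) ≤ S.Upsilon xs (k + 1) := by
  set g₀ := S.f' (S.x k)
  set g₁ := S.f' (S.x (k + 1))
  have hstep : S.x (k + 1) - S.x k = -(S.α k • g₀) := by rw [S.x_succ k]; abel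
  have hgd : S.α k * ⟪g₁ - g₀, g₀⟫ = -(S.lam (k + 1) * ‖g₁ - g₀‖ ^ 2) := by
    have := S.inner_grad_sub_x_sub k
    rw [hstep, inner_neg_right, real_inner_smul_right] at this
    linarith
  have key := mul_norm_add_sq_le_coeff (c := 1 + 2 * S.M (k + 2)) (b := S.α (k + 1))
    (S.alpha_pos k) (S.hlampos k) hgd (by linarith [S.M_succ_le_half (k + 1)])
  rw [add_sub_cancel, ← S.M_succ, ← S.P_succ] at key
  have hdecr : S.f (S.x (k + 1)) - S.f (S.x k) ≤
      S.lam (k + 1) * ‖g₁ - g₀‖ ^ 2 - S.α k * ‖g₀‖ ^ 2 := by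
    have h := S.sub_le_inner_grad (S.x (k + 1)) (S.x k)
    have hg : ⟪g₁, g₀⟫ = ⟪g₁ - g₀, g₀⟫ + ‖g₀‖ ^ 2 := by
      rw [inner_sub_left, real_inner_self_eq_norm_sq]; ring
    rw [hstep, inner_neg_right, real_inner_smul_right, hg, mul_add, hgd] at h
    linarith
  have hopt := S.sub_le_inner_grad (S.x (k + 1)) xs
  have hP := mul_le_mul_of_nonneg_left hdecr (S.P_succ_nonneg k)
  have hb := mul_le_mul_of_nonneg_left hopt (S.alpha_pos (k + 1)).le
  have hw := mul_nonneg (sub_nonneg.2 (S.P_succ_le k)) (sub_nonneg.2 (hxs (S.x k)))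
  rw [S.Upsilon_succ xs (k + 1), S.Upsilon_succ xs k, S.norm_x_succ_sub_sq (k + 1) xs,
    S.norm_x_succ_sub_x_sq (k + 1), S.norm_x_succ_sub_x_sq k]
  linarith

lemma Upsilon_one_le (hxs : ∀ y, S.f xs ≤ S.f y) :
    S.Upsilon xs 1 ≤ ‖S.x 0 - xs‖ ^ 2 + S.α 0 ^ 2 * (1 + 2 * S.M 1) * ‖S.f' (S.x 0)‖ ^ 2 +
      max (2 * S.P 1 - 2 * S.α 0) 0 * (S.f (S.x 0) - S.f xs) := by
  have hopt := mul_le_mul_of_nonneg_left (S.sub_le_inner_grad (S.x 0) xs) S.hα0.le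
  have hmax := mul_le_mul_of_nonneg_right (le_max_left (2 * S.P 1 - 2 * S.α 0) 0)
    (sub_nonneg.2 (hxs (S.x 0)))
  rw [S.Upsilon_succ xs 0, S.norm_x_succ_sub_sq 0 xs, S.norm_x_succ_sub_x_sq 0, S.P_zero]
  linarith

lemma norm_sq_le_Upsilon (hxs : ∀ y, S.f xs ≤ S.f y) (k : ℕ) :
    ‖S.x (k + 1) - xs‖ ^ 2 ≤ S.Upsilon xs (k + 1) := by
  have := mul_nonneg (S.M_succ_nonneg k) (sq_nonneg ‖S.x (k + 1) - S.x k‖)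
  have := mul_nonneg (S.alpha_add_P_nonneg k) (sub_nonneg.2 (hxs (S.x k)))
  rw [S.Upsilon_succ xs k]
  linarith

lemma norm_x_sub_le (hxs : ∀ y, S.f xs ≤ S.f y) {R : ℝ} (hR0 : 0 ≤ R)
    (hR2 : R ^ 2 = ‖S.x 0 - xs‖ ^ 2 + S.α 0 ^ 2 * (1 + 2 * S.M 1) * ‖S.f' (S.x 0)‖ ^ 2 +
      max (2 * S.P 1 - 2 * S.α 0) 0 * (S.f (S.x 0) - S.f xs)) (k : ℕ) :
    ‖S.x k - xs‖ ≤ R := by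
  refine (pow_le_pow_iff_left₀ (norm_nonneg _) hR0 two_ne_zero).1 ?_
  cases k with
  | zero =>
    have := mul_nonneg (mul_nonneg (sq_nonneg (S.α 0)) (by linarith [S.M_succ_nonneg 0] :
      0 ≤ 1 + 2 * S.M 1)) (sq_nonneg ‖S.f' (S.x 0)‖)
    have := mul_nonneg (le_max_right (2 * S.P 1 - 2 * S.α 0) 0) (sub_nonneg.2 (hxs (S.x 0)))
    linarith
  | succ k =>
    have hanti : Antitone fun k => S.Upsilon xs (k + 1) :=
      antitone_nat_of_succ_le (Upsilon_succ_succ_le hxs)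
    calc ‖S.x (k + 1) - xs‖ ^ 2 ≤ S.Upsilon xs (k + 1) := norm_sq_le_Upsilon hxs k
      _ ≤ S.Upsilon xs 1 := hanti (Nat.zero_le k)
      _ ≤ R ^ 2 := hR2 ▸ Upsilon_one_le hxs

end Lyapunov

section SumOfStepsizes

variable {u : ℝ}

lemma le_sqrt_two_mul_alpha (hul : ∀ k, u ≤ S.lam (k + 1)) (hu₁ : u ≤ √2 * S.α 1) {k : ℕ}
    (hk : 1 ≤ k) : u ≤ √2 * S.α k := by
  induction k, hk using Nat.le_induction with
  | base => exact hu₁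
  | succ k _ ih =>
    exact (S.stepRule k).le_sqrt_two_mul (S.alpha_pos k) (S.hlampos k) (S.theta_nonneg k) (hul k) ih

lemma add_credit_le_sum_alpha (hu : 0 ≤ u) (hul : ∀ k, u ≤ S.lam (k + 1))
    (hu₁ : u ≤ √2 * S.α 1) {k : ℕ} (hk : 1 ≤ k) :
    ((k : ℝ) - 2 + √2) * u + credit u (S.α k) (S.θ k) ≤ ∑ i ∈ Icc 1 k, S.α i := by
  induction k, hk using Nat.le_induction with
  | base =>
    have := credit_le_of_le_sqrt_two_mul (S.alpha_pos 1).le hu (S.theta_nonneg 1) hu₁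
    simp only [Icc_self, sum_singleton, Nat.cast_one]
    linarith
  | succ k hk ih =>
    have := (S.stepRule k).credit_le (S.alpha_pos k) (S.hlampos k) (S.theta_nonneg k) (hul k)
      (S.le_sqrt_two_mul_alpha hul hu₁ hk)
    rw [sum_Icc_succ_top (by omega), Nat.cast_succ]
    linarith

end SumOfStepsizes

end AdaBB

open scoped RealInnerProductSpace in
/-- Theorem 4.6: improved lower bound on the sum of AdaBB stepsizes.  With the initial
ratio `θ_0` chosen adaptively, `Σ_{i=1}^k α_i ≥ (k - 2 + √2)/L` for every `k ≥ 1`. -/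
theorem adabb_sum_stepsizes_improved (n : ℕ) (S : AdaBB n)
    (xs : EuclideanSpace ℝ (Fin n)) (hxs : ∀ y, S.f xs ≤ S.f y)
    (R : ℝ) (hR0 : 0 ≤ R)
    (hR2 : R ^ 2 = ‖S.x 0 - xs‖ ^ 2 + S.α 0 ^ 2 * (1 + 2 * S.M 1) * ‖S.f' (S.x 0)‖ ^ 2 +
      max (2 * S.P 1 - 2 * S.α 0) 0 * (S.f (S.x 0) - S.f xs))
    (L : ℝ) (hL : 0 < L)
    (hcoco : ∀ x y : EuclideanSpace ℝ (Fin n), ‖x - xs‖ ≤ R → ‖y - xs‖ ≤ R →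
      (1 / L) * ‖S.f' x - S.f' y‖ ^ 2 ≤ ⟪S.f' x - S.f' y, x - y⟫)
    (hθ0 : S.θ 0 = if Real.sqrt 2 * S.α 0 ≤ S.lam 1
      then S.lam 1 ^ 2 / (2 * S.α 0 ^ 2) - 1 else 0) :
    ∀ k : ℕ, 1 ≤ k → ((k : ℝ) - 2 + Real.sqrt 2) / L ≤ ∑ i ∈ Finset.Icc 1 k, S.α i := by
  intro k hk
  have hball := AdaBB.norm_x_sub_le hxs hR0 hR2
  have hlam : ∀ j, 1 / L ≤ S.lam (j + 1) := fun j =>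
    S.one_div_le_lam j (hcoco _ _ (hball _) (hball _))
  have hu₁ : 1 / L ≤ √2 * S.α 1 :=
    (hlam 0).trans ((S.stepRule 0).lam_le_sqrt_two_mul_of_initial S.hα0 (S.hlampos 0) hθ0)
  have hsum := S.add_credit_le_sum_alpha (by positivity) hlam hu₁ hk
  rw [div_eq_mul_one_div]
  linarith [AdaBB.credit_nonneg (u := 1 / L) (a := S.α k) (θ := S.θ k)]
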